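/- Let Φ be a family of affine self-maps of 𝕋^d, each of the form φ(x) = Ax + b with A an integer d×d matrix and b ∈ 𝕋^d, and let M(Φ) be the set of matrices occurring in Φ. If every sequence in Φ has a pointwise convergent subsequence, then M(Φ) is finite. -/

import Mathlib

/-!
Suppose infinitely many matrices occur, and take a sequence in `Φ` with pairwise distinct
matrices, then a subsequence converging pointwise. Subtracting the values at `0` and testing on
`x = t • eₛ`, each entry sequence `cᵢ = (Aᵢ)ᵣₛ` has `cᵢ • t` convergent for every `t ∈ 𝕋`, so
`(cᵢ₊₁ - cᵢ) • t → 0`. An integer sequence with `cᵢ • t → 0` for all `t` vanishes eventually: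
along its nonzero terms the characters `t ↦ exp (i cᵢ t)` have integral `0` over `𝕋`, yet they
converge boundedly to `1`. So consecutive matrices of the subsequence eventually agree,
contradicting distinctness.
-/

open Filter Topology

noncomputable def affApply {d : ℕ} (A : Matrix (Fin d) (Fin d) ℤ)
    (b : Fin d → AddCircle (2 * Real.pi)) (x : Fin d → AddCircle (2 * Real.pi)) :
    Fin d → AddCircle (2 * Real.pi) :=
  fun i => (∑ j, A i j • x j) + b i

open MeasureTheory

namespace AddCircle

variable {T : ℝ} [hT : Fact (0 < T)]

theorem not_forall_tendsto_zsmul_zero {c : ℕ → ℤ} (hc : ∀ i, c i ≠ 0) :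
    ¬ ∀ t : AddCircle T, Tendsto (fun i => c i • t) atTop (𝓝 0) := by
  intro h
  have h_int_zero : ∀ i, ∫ t : AddCircle T, fourier (c i) t ∂haarAddCircle = (0 : ℂ) := fun i =>
    integral_eq_zero_of_add_right_eq_neg (fourier_add_half_inv_index (hc i) hT.out)
  have h_int_lim : Tendsto (fun i => ∫ t : AddCircle T, fourier (c i) t ∂haarAddCircle) atTop
      (𝓝 (∫ _ : AddCircle T, (1 : ℂ) ∂haarAddCircle)) := by
    refine tendsto_integral_of_dominated_convergence (fun _ => 1)
      (fun i => (fourier (c i)).continuous.aestronglyMeasurable) (integrable_const 1)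
      (fun i => .of_forall fun t => (Circle.norm_coe _).le) (.of_forall fun t => ?_)
    have := ((fourier 1).continuous.tendsto 0).comp (h t)
    simpa [Function.comp_def, fourier_apply] using this
  simp only [h_int_zero, integral_const, probReal_univ, one_smul] at h_int_lim
  exact zero_ne_one (tendsto_nhds_unique tendsto_const_nhds h_int_lim)

theorem eventually_eq_zero_of_forall_tendsto_zsmul {c : ℕ → ℤ}
    (h : ∀ t : AddCircle T, Tendsto (fun i => c i • t) atTop (𝓝 0)) :
    ∀ᶠ i in atTop, c i = 0 := by
  by_contra hc
  obtain ⟨m, hm, hcm⟩ := extraction_of_frequently_atTop (not_eventually.1 hc)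
  exact not_forall_tendsto_zsmul_zero (T := T) hcm fun t => (h t).comp hm.tendsto_atTop

theorem eventually_succ_eq_of_forall_exists_tendsto_zsmul {c : ℕ → ℤ}
    (h : ∀ t : AddCircle T, ∃ L, Tendsto (fun i => c i • t) atTop (𝓝 L)) :
    ∀ᶠ i in atTop, c (i + 1) = c i := by
  refine (eventually_eq_zero_of_forall_tendsto_zsmul (T := T) fun t => ?_).mono
    fun i hi => sub_eq_zero.1 hi
  obtain ⟨L, hL⟩ := h t
  simpa only [sub_smul, sub_self, Function.comp_def] using
    (hL.comp (tendsto_add_atTop_nat 1)).sub hL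

end AddCircle

theorem affApply_single_sub_affApply_zero {d : ℕ} (A : Matrix (Fin d) (Fin d) ℤ)
    (b : Fin d → AddCircle (2 * Real.pi)) (r s : Fin d) (t : AddCircle (2 * Real.pi)) :
    affApply A b (Pi.single s t) r - affApply A b 0 r = A r s • t := by
  simp [affApply, Pi.single_apply]

theorem exists_tendsto_zsmul_of_forall_exists_tendsto_affApply {d : ℕ} {ι : Type*}
    {l : Filter ι} {A : ι → Matrix (Fin d) (Fin d) ℤ} {b : ι → Fin d → AddCircle (2 * Real.pi)}
    (h : ∀ x, ∃ L, Tendsto (fun i => affApply (A i) (b i) x) l (𝓝 L))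
    (r s : Fin d) (t : AddCircle (2 * Real.pi)) :
    ∃ L, Tendsto (fun i => A i r s • t) l (𝓝 L) := by
  obtain ⟨L₁, h₁⟩ := h (Pi.single s t)
  obtain ⟨L₀, h₀⟩ := h 0
  refine ⟨L₁ r - L₀ r, ?_⟩
  simpa only [affApply_single_sub_affApply_zero] using
    (tendsto_pi_nhds.1 h₁ r).sub (tendsto_pi_nhds.1 h₀ r)

theorem Set.Infinite.exists_seq_mem_injective_comp {α β : Type*} {s : Set α} {f : α → β}
    (hs : (f '' s).Infinite) : ∃ p : ℕ → α, (∀ n, p n ∈ s) ∧ Function.Injective (f ∘ p) := by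
  choose p hps hp using fun n => (hs.natEmbedding _ n).2
  refine ⟨p, hps, fun m n hmn => (hs.natEmbedding _).injective (Subtype.ext ?_)⟩
  simpa only [Function.comp_apply, hp] using hmn

theorem stmt3 {d : ℕ}
    (Φ : Set (Matrix (Fin d) (Fin d) ℤ × (Fin d → AddCircle (2 * Real.pi))))
    (h : ∀ φ : ℕ → Matrix (Fin d) (Fin d) ℤ × (Fin d → AddCircle (2 * Real.pi)),
      (∀ n, φ n ∈ Φ) → ∃ k : ℕ → ℕ, StrictMono k ∧
        ∀ x, ∃ L, Tendsto (fun i => affApply (φ (k i)).1 (φ (k i)).2 x) atTop (𝓝 L)) :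
    (Prod.fst '' Φ).Finite := by
  have : Fact (0 < 2 * Real.pi) := ⟨Real.two_pi_pos⟩
  by_contra hinf
  obtain ⟨φ, hφΦ, hφ_inj⟩ := Set.Infinite.exists_seq_mem_injective_comp hinf
  obtain ⟨k, hk, hconv⟩ := h φ hφΦ
  have h_entries : ∀ r s, ∀ᶠ i in atTop, (φ (k (i + 1))).1 r s = (φ (k i)).1 r s := fun r s =>
    AddCircle.eventually_succ_eq_of_forall_exists_tendsto_zsmul
      (exists_tendsto_zsmul_of_forall_exists_tendsto_affApply hconv r s)
  obtain ⟨i, hi⟩ := (eventually_all.2 fun r => eventually_all.2 (h_entries r)).exists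
  exact (hk i.lt_succ_self).ne' (hφ_inj (Matrix.ext hi))
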